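/- arXiv:0810.0098 — 6 statements merged into one kernel-verified Lean document; each statement's English description precedes it below -/
import Mathlib

section
/- If X ⊆ ℝⁿ, F : X → ℝᵐ, x̄ ∈ X, and there is an open set U containing x̄ such that U ∩ X is convex, then the Lipschitz modulus of F at x̄ equals the limsup over x → x̄ in X of the calmness modulus of F at x. -/
open Filter Topology Metric Set
open scoped ENNReal

/-- Calmness modulus of `f` at `xb` relative to `X`:
`limsup_{x → xb in X, x ≠ xb} ‖f x − f xb‖ / ‖x − xb‖`, valued in `ℝ≥0∞`. -/
noncomputable def calmMod {E F : Type*} [NormedAddCommGroup E] [NormedAddCommGroup F]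
    (f : E → F) (X : Set E) (xb : E) : ℝ≥0∞ :=
  Filter.limsup (fun x => ENNReal.ofReal (‖f x - f xb‖ / ‖x - xb‖)) (𝓝[X \ {xb}] xb)

/-- Lipschitz modulus of `f` at `xb` relative to `X`:
`limsup_{x,x' → xb in X, x ≠ x'} ‖f x − f x'‖ / ‖x − x'‖`, valued in `ℝ≥0∞`. -/
noncomputable def lipMod {E F : Type*} [NormedAddCommGroup E] [NormedAddCommGroup F]
    (f : E → F) (X : Set E) (xb : E) : ℝ≥0∞ :=
  Filter.limsup (fun p : E × E => ENNReal.ofReal (‖f p.1 - f p.2‖ / ‖p.1 - p.2‖))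
    (((𝓝[X] xb) ×ˢ (𝓝[X] xb)) ⊓ 𝓟 {p : E × E | p.1 ≠ p.2})

lemma calm_le_lip {E F : Type*} [NormedAddCommGroup E] [NormedAddCommGroup F]
    (f : E → F) (X : Set E) (xb : E) :
    Filter.limsup (fun x => calmMod f X x) (𝓝[X] xb) ≤ lipMod f X xb := by
  apply le_of_forall_gt_imp_ge_of_dense
  intro c hc
  have hev : ∀ᶠ p in ((𝓝[X] xb) ×ˢ (𝓝[X] xb)) ⊓ 𝓟 {p : E × E | p.1 ≠ p.2},
      ENNReal.ofReal (‖f p.1 - f p.2‖ / ‖p.1 - p.2‖) < c :=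
    Filter.eventually_lt_of_limsup_lt hc
  rw [Filter.eventually_inf_principal, Filter.eventually_iff] at hev
  obtain ⟨s, hs, s', hs', hss⟩ := Filter.mem_prod_iff.mp hev
  have hA : s ∩ s' ∈ 𝓝[X] xb := Filter.inter_mem hs hs'
  obtain ⟨t, htop, hxt, hts⟩ := mem_nhdsWithin.mp hA
  refine Filter.limsup_le_of_le (by isBoundedDefault) ?_
  filter_upwards [inter_mem_nhdsWithin X (htop.mem_nhds hxt)] with x hx
  refine Filter.limsup_le_of_le (by isBoundedDefault) ?_
  filter_upwards [inter_mem_nhdsWithin (X \ {x}) (htop.mem_nhds hx.2)] with y hy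
  have hyA : y ∈ s ∩ s' := hts ⟨hy.2, hy.1.1⟩
  have hxA : x ∈ s ∩ s' := hts ⟨hx.2, hx.1⟩
  have hne : y ≠ x := hy.1.2
  exact le_of_lt (hss (Set.mk_mem_prod hyA.1 hxA.2) hne)

lemma chain_bound {G : Type*} [NormedAddCommGroup G] (g : ℝ → G) (c : ℝ)
    (h : ∀ t ∈ Icc (0:ℝ) 1, ∃ r > 0, ∀ s ∈ Icc (0:ℝ) 1, |s - t| < r → ‖g s - g t‖ ≤ c * |s - t|) :
    ‖g 1 - g 0‖ ≤ c := by
  set S : Set ℝ := {t | t ∈ Icc (0:ℝ) 1 ∧ ‖g t - g 0‖ ≤ c * t} with hSdef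
  have h0 : (0:ℝ) ∈ S := ⟨⟨le_refl 0, zero_le_one⟩, by simp⟩
  have hne : S.Nonempty := ⟨0, h0⟩
  have hbdd : BddAbove S := ⟨1, fun t ht => ht.1.2⟩
  set T := sSup S with hT
  have hT0 : 0 ≤ T := le_csSup hbdd h0
  have hT1 : T ≤ 1 := csSup_le hne (fun t ht => ht.1.2)
  obtain ⟨r, hr, hloc⟩ := h T ⟨hT0, hT1⟩
  have hTS : T ∈ S := by
    obtain ⟨t, htS, htT⟩ := exists_lt_of_lt_csSup hne (show T - r < T by linarith)
    have htle : t ≤ T := le_csSup hbdd htS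
    have habs : |t - T| < r := by rw [abs_sub_lt_iff]; constructor <;> linarith
    have h1 : ‖g t - g T‖ ≤ c * |t - T| := hloc t htS.1 habs
    have h2 : ‖g T - g 0‖ ≤ ‖g T - g t‖ + ‖g t - g 0‖ := norm_sub_le_norm_sub_add_norm_sub _ _ _
    rw [norm_sub_rev] at h1
    have habs2 : |t - T| = T - t := by rw [abs_sub_comm, abs_of_nonneg]; linarith
    refine ⟨⟨hT0, hT1⟩, ?_⟩
    calc ‖g T - g 0‖ ≤ c * |t - T| + ‖g t - g 0‖ := by linarith [h1, h2]
      _ ≤ c * (T - t) + c * t := by rw [habs2]; linarith [htS.2]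
      _ = c * T := by ring
  by_cases hT1' : T = 1
  · have := hTS.2; rw [hT1'] at this; simpa using this
  · exfalso
    have hTlt : T < 1 := lt_of_le_of_ne hT1 hT1'
    set s := min 1 (T + r / 2) with hs
    have hsT : T < s := lt_min hTlt (by linarith)
    have hs1 : s ≤ 1 := min_le_left _ _
    have hs0 : 0 ≤ s := le_min zero_le_one (by linarith)
    have habs : |s - T| < r := by
      rw [abs_of_nonneg (by linarith)]
      have : s ≤ T + r / 2 := min_le_right _ _
      linarith
    have h1 : ‖g s - g T‖ ≤ c * |s - T| := hloc s ⟨hs0, hs1⟩ habs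
    have h2 : ‖g s - g 0‖ ≤ ‖g s - g T‖ + ‖g T - g 0‖ := norm_sub_le_norm_sub_add_norm_sub _ _ _
    have habs2 : |s - T| = s - T := abs_of_nonneg (by linarith)
    have hsS : s ∈ S := by
      refine ⟨⟨hs0, hs1⟩, ?_⟩
      calc ‖g s - g 0‖ ≤ c * (s - T) + c * T := by rw [habs2] at h1; linarith [hTS.2]
        _ = c * s := by ring
    exact absurd (le_csSup hbdd hsS) (not_le.mpr hsT)

lemma lip_le_calm {E F : Type*} [NormedAddCommGroup E] [NormedSpace ℝ E]
    [NormedAddCommGroup F]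
    (f : E → F) (X : Set E) (xb : E) (hxb : xb ∈ X)
    (U : Set E) (hU : IsOpen U) (hxbU : xb ∈ U) (hconv : Convex ℝ (U ∩ X)) :
    lipMod f X xb ≤ Filter.limsup (fun x => calmMod f X x) (𝓝[X] xb) := by
  apply le_of_forall_gt_imp_ge_of_dense
  intro c hc
  rcases eq_or_ne c ⊤ with rfl | hcT
  · exact le_top
  set K := c.toReal with hK
  have hK0 : 0 ≤ K := ENNReal.toReal_nonneg
  have hev : ∀ᶠ x in 𝓝[X] xb, calmMod f X x < c := Filter.eventually_lt_of_limsup_lt hc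
  rw [Filter.eventually_iff] at hev
  obtain ⟨δ₁, hδ₁, hball⟩ := Metric.mem_nhdsWithin_iff.mp hev
  obtain ⟨δ₂, hδ₂, hballU⟩ := Metric.isOpen_iff.mp hU xb hxbU
  set δ := min δ₁ δ₂ with hδdef
  have hδ : 0 < δ := lt_min hδ₁ hδ₂
  have hsubU : ball xb δ ⊆ U :=
    (Metric.ball_subset_ball (min_le_right δ₁ δ₂)).trans hballU
  have hsub1 : ball xb δ ⊆ ball xb δ₁ := Metric.ball_subset_ball (min_le_left δ₁ δ₂)
  -- every point of ball xb δ ∩ X has small calm modulus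
  have hcalm : ∀ z ∈ ball xb δ ∩ X, calmMod f X z < c :=
    fun z hz => hball ⟨hsub1 hz.1, hz.2⟩
  refine Filter.limsup_le_of_le (by isBoundedDefault) ?_
  rw [Filter.eventually_inf_principal]
  have hmemδ : ball xb δ ∩ X ∈ 𝓝[X] xb := by
    rw [Set.inter_comm]
    exact inter_mem_nhdsWithin X (Metric.ball_mem_nhds xb hδ)
  filter_upwards [Filter.prod_mem_prod hmemδ hmemδ] with p hp hpne
  obtain ⟨hx, hx'⟩ := hp
  set x := p.1 with hxdef
  set x' := p.2 with hx'def
  have hd : (0:ℝ) < ‖x - x'‖ := by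
    rw [norm_pos_iff, sub_ne_zero]; exact hpne
  -- the segment from x' to x stays in ball xb δ ∩ X
  have hsegsub : ∀ t ∈ Icc (0:ℝ) 1, x' + t • (x - x') ∈ ball xb δ ∩ X := by
    intro t ht
    have hseg : x' + t • (x - x') ∈ segment ℝ x' x := by
      rw [segment_eq_image']
      exact ⟨t, ht, rfl⟩
    constructor
    · exact (convex_ball xb δ).segment_subset hx'.1 hx.1 hseg
    · exact (hconv.segment_subset ⟨hsubU hx'.1, hx'.2⟩ ⟨hsubU hx.1, hx.2⟩ hseg).2
  -- apply the chain lemma to g t = f (x' + t • (x - x'))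
  have hchain : ‖f (x' + (1:ℝ) • (x - x')) - f (x' + (0:ℝ) • (x - x'))‖ ≤ (K * ‖x - x'‖) * 1 := by
    rw [mul_one]
    apply chain_bound (fun t => f (x' + t • (x - x'))) (K * ‖x - x'‖)
    intro t ht
    set z := x' + t • (x - x') with hz
    have hzmem := hsegsub t ht
    have hzc : calmMod f X z < c := hcalm z hzmem
    have hev2 : ∀ᶠ y in 𝓝[X \ {z}] z,
        ENNReal.ofReal (‖f y - f z‖ / ‖y - z‖) < c :=
      Filter.eventually_lt_of_limsup_lt hzc
    rw [Filter.eventually_iff] at hev2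
    obtain ⟨r, hr, hrball⟩ := Metric.mem_nhdsWithin_iff.mp hev2
    refine ⟨r / ‖x - x'‖, div_pos hr hd, ?_⟩
    intro s hs hst
    set y := x' + s • (x - x') with hy
    have hyz : y - z = (s - t) • (x - x') := by
      simp only [hy, hz]; module
    have hyznorm : ‖y - z‖ = |s - t| * ‖x - x'‖ := by
      rw [hyz, norm_smul, Real.norm_eq_abs]
    by_cases hyzeq : y = z
    · simp only [hyzeq, sub_self, norm_zero]
      positivity
    · have hymem := hsegsub s hs
      have hynear : y ∈ ball z r ∩ (X \ {z}) := by
        refine ⟨?_, hymem.2, hyzeq⟩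
        rw [mem_ball, dist_eq_norm, hyznorm]
        calc |s - t| * ‖x - x'‖ < (r / ‖x - x'‖) * ‖x - x'‖ := by
              exact mul_lt_mul_of_pos_right hst hd
          _ = r := div_mul_cancel₀ r (ne_of_gt hd)
      have hlt : ENNReal.ofReal (‖f y - f z‖ / ‖y - z‖) < c := hrball hynear
      have hq0 : 0 ≤ ‖f y - f z‖ / ‖y - z‖ := by positivity
      rw [ENNReal.ofReal_lt_iff_lt_toReal hq0 hcT] at hlt
      have hyzpos : (0:ℝ) < ‖y - z‖ := by
        rw [norm_pos_iff, sub_ne_zero]; exact hyzeq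
      have : ‖f y - f z‖ < K * ‖y - z‖ := (div_lt_iff₀ hyzpos).mp hlt
      calc ‖f y - f z‖ ≤ K * ‖y - z‖ := le_of_lt this
        _ = K * ‖x - x'‖ * |s - t| := by rw [hyznorm]; ring
  simp only [one_smul, zero_smul, add_zero, add_sub_cancel, mul_one] at hchain
  have hfinal : ‖f x - f x'‖ / ‖x - x'‖ ≤ K := by
    rw [div_le_iff₀ hd]
    exact hchain
  calc ENNReal.ofReal (‖f x - f x'‖ / ‖x - x'‖) ≤ ENNReal.ofReal K :=
        ENNReal.ofReal_le_ofReal hfinal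
    _ = c := ENNReal.ofReal_toReal hcT


/-- If there is an open set `U` containing `xb` such that `U ∩ X` is convex, then the
Lipschitz modulus of `F` at `xb` equals the limsup of the calmness moduli at nearby points. -/
theorem lipMod_eq_limsup_calmMod {n m : ℕ} (X : Set (EuclideanSpace ℝ (Fin n)))
    (F : EuclideanSpace ℝ (Fin n) → EuclideanSpace ℝ (Fin m))
    (xb : EuclideanSpace ℝ (Fin n)) (hxb : xb ∈ X)
    (U : Set (EuclideanSpace ℝ (Fin n))) (hU : IsOpen U) (hxbU : xb ∈ U)
    (hconv : Convex ℝ (U ∩ X)) :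
    lipMod F X xb = Filter.limsup (fun x => calmMod F X x) (𝓝[X] xb) :=
  le_antisymm (lip_le_calm F X xb hxb U hU hxbU hconv) (calm_le_lip F X xb)
end

section
/- If f : ℝⁿ → ℝ ∪ {∞} is Lipschitz continuous at x̄ and subdifferentially regular there, then its calmness modulus at x̄ equals its Lipschitz modulus at x̄. -/
open Filter Topology Metric Set
open scoped ENNReal

open scoped RealInnerProductSpace

/-- `v` is a regular subgradient of `f` at `x`:
`f x' ≥ f x + ⟪v, x' − x⟫ + o(‖x' − x‖)`. -/
def regSubgrad {n : ℕ} (f : EuclideanSpace ℝ (Fin n) → ℝ)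
    (x : EuclideanSpace ℝ (Fin n)) : Set (EuclideanSpace ℝ (Fin n)) :=
  {v | ∀ ε > (0 : ℝ), ∀ᶠ x' in 𝓝 x, f x' ≥ f x + ⟪v, x' - x⟫ - ε * ‖x' - x‖}

/-- `v` is a (general) subgradient of `f` at `x`: a limit of regular subgradients
`vᵛ ∈ ∂̂f(xᵛ)` along `xᵛ → x` with `f xᵛ → f x`. -/
def genSubgrad {n : ℕ} (f : EuclideanSpace ℝ (Fin n) → ℝ)
    (x : EuclideanSpace ℝ (Fin n)) : Set (EuclideanSpace ℝ (Fin n)) :=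
  {v | ∃ (xs vs : ℕ → EuclideanSpace ℝ (Fin n)),
    Tendsto xs atTop (𝓝 x) ∧ Tendsto vs atTop (𝓝 v) ∧
    Tendsto (fun k => f (xs k)) atTop (𝓝 (f x)) ∧ ∀ k, vs k ∈ regSubgrad f (xs k)}

/-
Always `calm f(x̄) ≤ lip f(x̄)`. A regular subgradient `v` at `x̄` gives
`f (x̄ + t v) ≥ f x̄ + t ‖v‖² - o(t)`, so `calm f(x̄) ≥ ‖v‖`; under regularity it therefore suffices
that `lip f(x̄)` is at most the largest norm of a general subgradient at `x̄`.
If `f b - f a > c ‖b - a‖` for points `a, b` close to `x̄`, minimising the Zagrodny-type penalty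
`f z + A/2 ‖z - (a + t (b - a))‖² - c ‖b - a‖ t` over `t ∈ [0, 1]` and `z` near `x̄` gives a
point `z` near `x̄` with a regular subgradient `v`, `⟪v, b - a⟫ ≥ c ‖b - a‖`: minimality in `z` makes
`v = A (a + t (b - a) - z)` a proximal subgradient, minimality in `t` gives the inner product bound.
These `v` have norm `≥ c`, are bounded by the local Lipschitz constant, and a limit of them is a
general subgradient at `x̄` of norm `≥ c`.
-/

open scoped NNReal

section Moduli

variable {E F : Type*} [NormedAddCommGroup E] [NormedAddCommGroup F]

theorem calmMod_le_lipMod {f : E → F} {X : Set E} {xb : E} (hxb : xb ∈ X) :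
    calmMod f X xb ≤ lipMod f X xb := by
  have hpair : Tendsto (fun x => (x, xb)) (𝓝[X \ {xb}] xb)
      ((𝓝[X] xb ×ˢ 𝓝[X] xb) ⊓ 𝓟 {p : E × E | p.1 ≠ p.2}) := by
    refine tendsto_inf.2 ⟨?_, tendsto_principal.2 ?_⟩
    · exact (tendsto_id'.2 (nhdsWithin_mono xb sdiff_subset)).prodMk
        (tendsto_const_nhdsWithin hxb)
    · filter_upwards [self_mem_nhdsWithin] with x hx using hx.2
  calc calmMod f X xb
      = limsup (fun p : E × E => ENNReal.ofReal (‖f p.1 - f p.2‖ / ‖p.1 - p.2‖))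
          (map (fun x => (x, xb)) (𝓝[X \ {xb}] xb)) := rfl
    _ ≤ lipMod f X xb := limsup_le_limsup_of_le hpair

theorem calmMod_le_of_lipschitzOnWith {f : E → F} {K : ℝ≥0} {s X : Set E} {x : E}
    (hf : LipschitzOnWith K f s) (hs : s ∈ 𝓝 x) : calmMod f X x ≤ K := by
  refine limsup_le_of_le (by isBoundedDefault) ?_
  filter_upwards [nhdsWithin_le_nhds hs] with y hy
  rw [← ENNReal.ofReal_coe_nnreal]
  exact ENNReal.ofReal_le_ofReal
    (div_le_of_le_mul₀ (norm_nonneg _) K.2 (hf.norm_sub_le hy (mem_of_mem_nhds hs)))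

theorem exists_lipschitzOnWith_of_lipMod_lt {f : E → F} {xb : E} {K : ℝ≥0}
    (hK : lipMod f univ xb < K) : ∃ s ∈ 𝓝 xb, LipschitzOnWith K f s := by
  have hev := eventually_lt_of_limsup_lt hK (by isBoundedDefault)
  rw [nhdsWithin_univ, eventually_inf_principal] at hev
  obtain ⟨s, hs, hss⟩ := mem_prod_self_iff.1 hev
  refine ⟨s, hs, LipschitzOnWith.of_dist_le_mul fun x hx y hy => ?_⟩
  rcases eq_or_ne x y with rfl | hxy
  · simp
  have hratio := hss (mk_mem_prod hx hy) hxy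
  rw [← ENNReal.ofReal_coe_nnreal] at hratio
  rw [dist_eq_norm, dist_eq_norm]
  exact ((div_lt_iff₀ (norm_pos_iff.2 (sub_ne_zero.2 hxy))).1
    (ENNReal.ofReal_lt_ofReal_iff'.1 hratio).1).le

theorem exists_mul_norm_lt_sub_of_ofReal_lt_lipMod {f : E → ℝ} {xb : E} {c ε : ℝ}
    (hc : ENNReal.ofReal c < lipMod f univ xb) (hε : 0 < ε) :
    ∃ a ∈ ball xb ε, ∃ b ∈ ball xb ε, c * ‖b - a‖ < f b - f a := by
  rw [lipMod, nhdsWithin_univ] at hc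
  have hballs : ∀ᶠ p : E × E in (𝓝 xb ×ˢ 𝓝 xb) ⊓ 𝓟 {p | p.1 ≠ p.2},
      p ∈ ball xb ε ×ˢ ball xb ε ∧ p.1 ≠ p.2 :=
    inter_mem_inf (prod_mem_prod (ball_mem_nhds xb hε) (ball_mem_nhds xb hε))
      (mem_principal_self _)
  obtain ⟨⟨x, y⟩, hlt, ⟨hx, hy⟩, hxy⟩ :=
    ((frequently_lt_of_lt_limsup (by isBoundedDefault) hc).and_eventually hballs).exists
  have hlt : c * ‖x - y‖ < |f x - f y| :=
    (lt_div_iff₀ (norm_pos_iff.2 (sub_ne_zero.2 hxy))).1 (ENNReal.ofReal_lt_ofReal_iff'.1 hlt).1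
  rcases lt_abs.1 hlt with h | h
  · exact ⟨y, hy, x, hx, h⟩
  · exact ⟨x, hx, y, hy, by rw [norm_sub_rev]; linarith⟩

end Moduli

theorem nonneg_of_forall_mem_Ioo_mul_add_sq_nonneg {p q ε : ℝ} (hε : 0 < ε)
    (h : ∀ s ∈ Ioo 0 ε, 0 ≤ s * p + q * s ^ 2) : 0 ≤ p := by
  have hlim : Tendsto (fun s => p + q * s) (𝓝[>] 0) (𝓝 p) :=
    ((by fun_prop : Continuous fun s => p + q * s).tendsto' 0 p (by simp)).mono_left
      nhdsWithin_le_nhds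
  refine ge_of_tendsto hlim ?_
  filter_upwards [Ioo_mem_nhdsGT hε] with s hs
  exact (mul_nonneg_iff_of_pos_left hs.1).1 (by linarith [h s hs])

theorem le_inner_of_isMinOn_penalty {V : Type*} [NormedAddCommGroup V] [InnerProductSpace ℝ V]
    {z a b : V} {A m t₀ : ℝ} (ht₀ : t₀ < 1)
    (h : IsMinOn (fun t => A / 2 * ‖z - (a + t • (b - a))‖ ^ 2 - m * t) (Icc t₀ 1) t₀) :
    m ≤ ⟪A • (a + t₀ • (b - a) - z), b - a⟫ := by
  refine sub_nonneg.1 (nonneg_of_forall_mem_Ioo_mul_add_sq_nonneg (q := A / 2 * ‖b - a‖ ^ 2)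
    (sub_pos.2 ht₀) fun s hs => ?_)
  have hstep := isMinOn_iff.1 h (t₀ + s) ⟨by linarith [hs.1], by linarith [hs.2]⟩
  have hexp : ‖z - (a + (t₀ + s) • (b - a))‖ ^ 2 = ‖z - (a + t₀ • (b - a))‖ ^ 2
      - 2 * s * ⟪z - (a + t₀ • (b - a)), b - a⟫ + s ^ 2 * ‖b - a‖ ^ 2 := by
    rw [show z - (a + (t₀ + s) • (b - a)) = (z - (a + t₀ • (b - a))) - s • (b - a) by module,
      norm_sub_sq_real, real_inner_smul_right, norm_smul, Real.norm_eq_abs, mul_pow, sq_abs]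
    ring
  rw [real_inner_smul_left, ← neg_sub z, inner_neg_left]
  linear_combination hstep + A / 2 * hexp

section Subgradients

variable {n : ℕ}

local notation "𝔼" => EuclideanSpace ℝ (Fin n)

theorem mem_regSubgrad_of_eventually_le {f : 𝔼 → ℝ} {x v : 𝔼} {C : ℝ}
    (h : ∀ᶠ y in 𝓝 x, f x + ⟪v, y - x⟫ - C * ‖y - x‖ ^ 2 ≤ f y) : v ∈ regSubgrad f x := by
  intro ε hε
  have hsmall : ∀ᶠ y in 𝓝 x, C * ‖y - x‖ ≤ ε := by
    have : Tendsto (fun y => C * ‖y - x‖) (𝓝 x) (𝓝 0) :=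
      (by fun_prop : Continuous fun y => C * ‖y - x‖).tendsto' x 0 (by simp)
    exact this.eventually (ge_mem_nhds hε)
  filter_upwards [h, hsmall] with y hy hyε
  nlinarith [mul_le_mul_of_nonneg_right hyε (norm_nonneg (y - x))]

theorem smul_sub_mem_regSubgrad_of_isLocalMin {f : 𝔼 → ℝ} {z w : 𝔼} {A : ℝ}
    (h : IsLocalMin (fun y => f y + A / 2 * ‖y - w‖ ^ 2) z) : A • (w - z) ∈ regSubgrad f z := by
  refine mem_regSubgrad_of_eventually_le (C := A / 2) ?_
  filter_upwards [h] with y hy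
  have hexp : ‖y - w‖ ^ 2 = ‖y - z‖ ^ 2 - 2 * ⟪y - z, w - z⟫ + ‖z - w‖ ^ 2 := by
    rw [show y - w = (y - z) - (w - z) by abel, norm_sub_sq_real, norm_sub_rev z w]
  rw [real_inner_smul_left, real_inner_comm]
  linear_combination hy + A / 2 * hexp

noncomputable def segmentPenalty (f : 𝔼 → ℝ) (a b : 𝔼) (A m : ℝ) (p : ℝ × 𝔼) : ℝ :=
  f p.2 + A / 2 * ‖p.2 - (a + p.1 • (b - a))‖ ^ 2 - m * p.1

theorem exists_regSubgrad_of_isMinOn_segmentPenalty {f : 𝔼 → ℝ} {x a b z₀ : 𝔼} {R A m t₀ : ℝ}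
    (hmin : IsMinOn (segmentPenalty f a b A m) (Icc 0 1 ×ˢ closedBall x R) (t₀, z₀))
    (ht₀ : t₀ ∈ Ico 0 1) (hz₀ : z₀ ∈ ball x R) : ∃ v ∈ regSubgrad f z₀, m ≤ ⟪v, b - a⟫ := by
  have hmin' : ∀ t ∈ Icc (0 : ℝ) 1, ∀ z ∈ closedBall x R,
      segmentPenalty f a b A m (t₀, z₀) ≤ segmentPenalty f a b A m (t, z) :=
    fun t ht z hz => hmin ⟨ht, hz⟩
  refine ⟨A • (a + t₀ • (b - a) - z₀), ?_, ?_⟩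
  · apply smul_sub_mem_regSubgrad_of_isLocalMin
    filter_upwards [isOpen_ball.mem_nhds hz₀] with y hy
    simpa [segmentPenalty] using hmin' t₀ (Ico_subset_Icc_self ht₀) y (ball_subset_closedBall hy)
  · refine le_inner_of_isMinOn_penalty ht₀.2 (isMinOn_iff.2 fun t ht => ?_)
    have := hmin' t ⟨ht₀.1.trans ht.1, ht.2⟩ z₀ (ball_subset_closedBall hz₀)
    simp only [segmentPenalty] at this
    linarith

theorem exists_isMinOn_segmentPenalty {f : 𝔼 → ℝ} {x a b : 𝔼} {r δ m : ℝ} {K : ℝ≥0}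
    (hf : LipschitzOnWith K f (closedBall x (r + δ))) (hδ : 0 < δ)
    (ha : a ∈ closedBall x r) (hb : b ∈ closedBall x r) (hm : m < f b - f a) :
    ∃ A t₀ z₀, t₀ ∈ Ico 0 1 ∧ z₀ ∈ ball x (r + δ) ∧
      IsMinOn (segmentPenalty f a b A m) (Icc 0 1 ×ˢ closedBall x (r + δ)) (t₀, z₀) := by
  set R := r + δ
  have hrR : closedBall x r ⊆ closedBall x R := closedBall_subset_closedBall (by linarith)
  have hR : 0 ≤ R := by linarith [dist_nonneg.trans (mem_closedBall.1 ha)]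
  obtain ⟨η₁, hη₁, hKη₁⟩ := exists_pos_mul_lt (show 0 < f b - f a - m by linarith) K
  set η := min η₁ (δ / 2)
  have hη : 0 < η := lt_min hη₁ (half_pos hδ)
  have hηδ : η < δ := (min_le_right _ _).trans_lt (half_lt_self hδ)
  have hKη : K * η < f b - f a - m :=
    (mul_le_mul_of_nonneg_left (min_le_left _ _) K.2).trans_lt hKη₁
  -- `A / 2 * η ^ 2` beats every possible gain `f a - f z + m * t` on the ball, which traps the
  -- minimiser within `η` of the segment
  set A := 2 * (2 * K * R + |m| + 1) / η ^ 2
  have hA : 0 < A := div_pos (by nlinarith [K.2, abs_nonneg m]) (by positivity)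
  have hAη : A / 2 * η ^ 2 = 2 * K * R + |m| + 1 := by simp only [A]; field_simp
  have hcont : ContinuousOn (segmentPenalty f a b A m) (Icc 0 1 ×ˢ closedBall x R) :=
    ((hf.continuousOn.comp continuousOn_snd fun p hp => hp.2).add
      (by fun_prop : Continuous fun p : ℝ × 𝔼 =>
        A / 2 * ‖p.2 - (a + p.1 • (b - a))‖ ^ 2).continuousOn).sub
      (by fun_prop : Continuous fun p : ℝ × 𝔼 => m * p.1).continuousOn
  obtain ⟨⟨t₀, z₀⟩, ⟨ht₀, hz₀⟩, hmin⟩ :=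
    (isCompact_Icc.prod (isCompact_closedBall x R)).exists_isMinOn
      ⟨(0, a), ⟨left_mem_Icc.2 zero_le_one, hrR ha⟩⟩ hcont
  have hle_a : f z₀ + A / 2 * ‖z₀ - (a + t₀ • (b - a))‖ ^ 2 - m * t₀ ≤ f a := by
    simpa [segmentPenalty] using
      hmin (show ((0 : ℝ), a) ∈ _ from ⟨left_mem_Icc.2 zero_le_one, hrR ha⟩)
  have hclose : ‖z₀ - (a + t₀ • (b - a))‖ < η := by
    have hfa : f a - f z₀ ≤ K * (2 * R) := by
      refine (le_abs_self _).trans ((hf.norm_sub_le (hrR ha) hz₀).trans ?_)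
      gcongr
      linarith [dist_triangle_right a z₀ x, mem_closedBall.1 (hrR ha), mem_closedBall.1 hz₀,
        dist_eq_norm a z₀]
    have hmt : m * t₀ ≤ |m| := by
      nlinarith [le_abs_self m, neg_abs_le m, ht₀.1, ht₀.2, abs_nonneg m]
    refine lt_of_pow_lt_pow_left₀ 2 hη.le (lt_of_mul_lt_mul_left (a := A / 2) ?_ (by linarith))
    nlinarith
  have ht₀1 : t₀ < 1 := by
    -- at `t = 1` the value is at least `f b - K * η - m > f a`, the value at `(0, a)`
    refine lt_of_le_of_ne ht₀.2 fun h => ?_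
    subst h
    have hfb : f b - f z₀ ≤ K * η := by
      refine (le_abs_self _).trans ((hf.norm_sub_le (hrR hb) hz₀).trans ?_)
      gcongr
      simpa [norm_sub_rev] using hclose.le
    nlinarith [sq_nonneg ‖z₀ - (a + (1 : ℝ) • (b - a))‖]
  have hz₀int : z₀ ∈ ball x R := by
    rw [mem_ball]
    linarith [dist_triangle z₀ (a + t₀ • (b - a)) x, dist_eq_norm z₀ (a + t₀ • (b - a)),
      mem_closedBall.1 ((convex_closedBall x r).add_smul_sub_mem ha hb ht₀)]
  exact ⟨A, t₀, z₀, ⟨ht₀.1, ht₀1⟩, hz₀int, hmin⟩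

theorem exists_regSubgrad_inner_ge_of_lt_sub {f : 𝔼 → ℝ} {x a b : 𝔼} {r δ m : ℝ} {K : ℝ≥0}
    (hf : LipschitzOnWith K f (closedBall x (r + δ))) (hδ : 0 < δ)
    (ha : a ∈ closedBall x r) (hb : b ∈ closedBall x r) (hm : m < f b - f a) :
    ∃ z ∈ ball x (r + δ), ∃ v ∈ regSubgrad f z, m ≤ ⟪v, b - a⟫ := by
  obtain ⟨A, t₀, z₀, ht₀, hz₀, hmin⟩ := exists_isMinOn_segmentPenalty hf hδ ha hb hm
  exact ⟨z₀, hz₀, exists_regSubgrad_of_isMinOn_segmentPenalty hmin ht₀ hz₀⟩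

theorem ofReal_norm_le_calmMod {f : 𝔼 → ℝ} {x v : 𝔼} (hv : v ∈ regSubgrad f x) :
    ENNReal.ofReal ‖v‖ ≤ calmMod f univ x := by
  rcases eq_or_ne v 0 with rfl | hv0
  · simp
  have hray : Tendsto (fun t : ℝ => x + t • v) (𝓝[>] 0) (𝓝 x) :=
    ((by fun_prop : Continuous fun t : ℝ => x + t • v).tendsto' 0 x (by simp)).mono_left
      nhdsWithin_le_nhds
  have hray' : Tendsto (fun t : ℝ => x + t • v) (𝓝[>] 0) (𝓝[univ \ {x}] x) := by
    refine tendsto_nhdsWithin_iff.2 ⟨hray, ?_⟩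
    filter_upwards [self_mem_nhdsWithin] with t (ht : 0 < t)
    simpa using And.intro ht.ne' hv0
  refine ENNReal.le_of_forall_nnreal_lt fun c hc => le_limsup_of_frequently_le
    (hray'.frequently (Eventually.frequently ?_)) (by isBoundedDefault)
  have hcv : (c : ℝ) < ‖v‖ := ENNReal.coe_lt_ofReal.1 hc
  filter_upwards [hray.eventually (hv _ (sub_pos.2 hcv)), self_mem_nhdsWithin]
    with t ht (htpos : 0 < t)
  have hnorm : ‖t • v‖ = t * ‖v‖ := by rw [norm_smul, Real.norm_of_nonneg htpos.le]
  simp only [add_sub_cancel_left, real_inner_smul_right, real_inner_self_eq_norm_sq, hnorm] at ht ⊢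
  rw [← ENNReal.ofReal_coe_nnreal]
  refine ENNReal.ofReal_le_ofReal ((le_div_iff₀ (by positivity)).2 ?_)
  nlinarith [Real.le_norm_self (f (x + t • v) - f x)]

theorem frequently_exists_regSubgrad_le_norm {f : 𝔼 → ℝ} {xb : 𝔼} {s : Set 𝔼} {K : ℝ≥0} {c : ℝ}
    (hf : LipschitzOnWith K f s) (hs : s ∈ 𝓝 xb) (hc : ENNReal.ofReal c < lipMod f univ xb) :
    ∃ᶠ z in 𝓝 xb, ∃ v ∈ regSubgrad f z, c ≤ ‖v‖ := by
  obtain ⟨ρ, hρ, hρs⟩ := Metric.mem_nhds_iff.1 hs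
  refine nhds_basis_ball.frequently_iff.2 fun ε hε => ?_
  obtain ⟨r, hr, hrε, hrρ⟩ : ∃ r > 0, r + r ≤ ε ∧ r + r < ρ :=
    ⟨min ε ρ / 3, by positivity, by linarith [min_le_left ε ρ], by linarith [min_le_right ε ρ]⟩
  obtain ⟨a, ha, b, hb, hab⟩ := exists_mul_norm_lt_sub_of_ofReal_lt_lipMod hc hr
  have hfr : LipschitzOnWith K f (closedBall xb (r + r)) :=
    hf.mono ((closedBall_subset_ball hrρ).trans hρs)
  obtain ⟨z, hz, v, hv, hcv⟩ :=
    exists_regSubgrad_inner_ge_of_lt_sub hfr hr (ball_subset_closedBall ha)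
      (ball_subset_closedBall hb) hab
  have hba : 0 < ‖b - a‖ := by
    refine norm_pos_iff.2 (sub_ne_zero.2 fun hba => ?_)
    simp [hba] at hab
  refine ⟨z, ball_subset_ball hrε hz, v, hv, ?_⟩
  exact le_of_mul_le_mul_right (hcv.trans (real_inner_le_norm v (b - a))) hba

theorem exists_mem_genSubgrad_of_frequently {f : 𝔼 → ℝ} {xb : 𝔼} {s : Set 𝔼}
    (hs : IsCompact s) (hf : ContinuousAt f xb)
    (h : ∃ᶠ z in 𝓝 xb, ∃ v ∈ regSubgrad f z, v ∈ s) : ∃ v ∈ genSubgrad f xb, v ∈ s := by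
  obtain ⟨zs, hzs, hvs⟩ := frequently_iff_seq_forall.1 h
  choose vs hvs hvss using hvs
  obtain ⟨v, hv, φ, hφ, hvφ⟩ := hs.tendsto_subseq hvss
  exact ⟨v, ⟨zs ∘ φ, vs ∘ φ, hzs.comp hφ.tendsto_atTop, hvφ,
    (hf.tendsto.comp hzs).comp hφ.tendsto_atTop, fun k => hvs (φ k)⟩, hv⟩

theorem lipMod_le_iSup_genSubgrad {f : 𝔼 → ℝ} {xb : 𝔼} (hlip : lipMod f univ xb ≠ ⊤) :
    lipMod f univ xb ≤ ⨆ v ∈ genSubgrad f xb, ENNReal.ofReal ‖v‖ := by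
  obtain ⟨K, hK, -⟩ := ENNReal.lt_iff_exists_nnreal_btwn.1 hlip.lt_top
  obtain ⟨s, hs, hf⟩ := exists_lipschitzOnWith_of_lipMod_lt hK
  refine ENNReal.le_of_forall_nnreal_lt fun c hc => ?_
  have hlarge := frequently_exists_regSubgrad_le_norm hf hs (c := c)
    (by rwa [ENNReal.ofReal_coe_nnreal])
  have hbdd : ∀ᶠ z in 𝓝 xb, ∀ v ∈ regSubgrad f z, ‖v‖ ≤ K := by
    filter_upwards [eventually_mem_nhds_iff.2 hs] with z hz v hv
    exact (ENNReal.ofReal_le_iff_le_toReal ENNReal.coe_ne_top).1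
      ((ofReal_norm_le_calmMod hv).trans (calmMod_le_of_lipschitzOnWith hf hz))
  obtain ⟨v, hv, hcv : (c : ℝ) ≤ ‖v‖, -⟩ := exists_mem_genSubgrad_of_frequently
    ((isCompact_closedBall (0 : 𝔼) K).inter_left (isClosed_le continuous_const continuous_norm))
    (hf.continuousOn.continuousAt hs)
    ((hlarge.and_eventually hbdd).mono fun z ⟨⟨v, hv, hcv⟩, hvK⟩ =>
      ⟨v, hv, hcv, mem_closedBall_zero_iff.2 (hvK v hv)⟩)
  calc (c : ℝ≥0∞) ≤ ENNReal.ofReal ‖v‖ := by rw [← ENNReal.ofReal_coe_nnreal]; gcongr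
    _ ≤ ⨆ v ∈ genSubgrad f xb, ENNReal.ofReal ‖v‖ := le_iSup₂_of_le v hv le_rfl

end Subgradients

/-- If `f` is Lipschitz continuous at `xb` and subdifferentially regular there
(the regular and general subgradient sets coincide), then the calmness modulus
of `f` at `xb` equals its Lipschitz modulus there. -/
theorem calmMod_eq_lipMod_of_subdiff_regular {n : ℕ}
    (f : EuclideanSpace ℝ (Fin n) → ℝ) (xb : EuclideanSpace ℝ (Fin n))
    (hlip : lipMod f Set.univ xb ≠ ⊤)
    (hreg : regSubgrad f xb = genSubgrad f xb) :
    calmMod f Set.univ xb = lipMod f Set.univ xb := by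
  refine le_antisymm (calmMod_le_lipMod (mem_univ xb)) ?_
  calc lipMod f univ xb ≤ ⨆ v ∈ genSubgrad f xb, ENNReal.ofReal ‖v‖ :=
        lipMod_le_iSup_genSubgrad hlip
    _ = ⨆ v ∈ regSubgrad f xb, ENNReal.ofReal ‖v‖ := by rw [hreg]
    _ ≤ calmMod f univ xb := iSup₂_le fun v hv => ofReal_norm_le_calmMod hv
end

section
/- For a continuous function f : X → ℝ and a point x ∈ X, there exists ε̄ > 0 such that the robust regularization f̄_ε is calm at x for all ε ∈ (0, ε̄] except on a set of measure zero. -/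
/-!
Write `g r = f̄_r(x)`. Since the balls nest, `g (ε - ‖x' - x‖) ≤ f̄_ε(x') ≤ g (ε + ‖x' - x‖)`
for `x' ∈ X` near `x`, so the difference quotients of `f̄_ε` at `x` are bounded by those of `g`
at `ε`. The function `g` is monotone on `[0, ∞)`, hence (Lebesgue) differentiable at almost
every `ε > 0`, and at every such `ε` its difference quotients stay bounded.
-/

open Filter Topology Metric Set
open scoped ENNReal

/-- The robust regularization `f̄_ε(x) = sup {f x' : x' ∈ X, ‖x' − x‖ ≤ ε}`. -/
noncomputable def robustReg {n : ℕ} (f : EuclideanSpace ℝ (Fin n) → ℝ)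
    (X : Set (EuclideanSpace ℝ (Fin n))) (ε : ℝ) (x : EuclideanSpace ℝ (Fin n)) : ℝ :=
  sSup (f '' {x' ∈ X | ‖x' - x‖ ≤ ε})

open Asymptotics MeasureTheory

theorem calmMod_ne_top_of_isBigO {E F : Type*} [NormedAddCommGroup E] [NormedAddCommGroup F]
    {f : E → F} {X : Set E} {x : E} (h : (fun x' => f x' - f x) =O[𝓝[X] x] (fun x' => x' - x)) :
    calmMod f X x ≠ ⊤ := by
  obtain ⟨C, hC⟩ := h.bound
  have hle : calmMod f X x ≤ ENNReal.ofReal C := by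
    refine limsup_le_of_le (by isBoundedDefault) ?_
    filter_upwards [nhdsWithin_mono x sdiff_subset hC, self_mem_nhdsWithin] with x' hbound hx'
    have hpos : 0 < ‖x' - x‖ := norm_pos_iff.2 (sub_ne_zero.2 hx'.2)
    exact ENNReal.ofReal_le_ofReal ((div_le_iff₀ hpos).2 hbound)
  exact ne_top_of_le_ne_top ENNReal.ofReal_ne_top hle

section robustReg

variable {n : ℕ} {f : EuclideanSpace ℝ (Fin n) → ℝ} {X : Set (EuclideanSpace ℝ (Fin n))}

theorem robustReg_eq_sSup_image_inter_closedBall (ε : ℝ) (x : EuclideanSpace ℝ (Fin n)) :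
    robustReg f X ε x = sSup (f '' (X ∩ closedBall x ε)) := by
  simp only [robustReg, ← dist_eq_norm]
  rfl

theorem robustReg_le_robustReg (hX : IsClosed X) (hf : ContinuousOn f X)
    {a b : EuclideanSpace ℝ (Fin n)} {r s : ℝ} (hne : (X ∩ closedBall a r).Nonempty)
    (hrs : r + dist a b ≤ s) : robustReg f X r a ≤ robustReg f X s b := by
  rw [robustReg_eq_sSup_image_inter_closedBall, robustReg_eq_sSup_image_inter_closedBall]
  have hbdd : BddAbove (f '' (X ∩ closedBall b s)) :=
    ((isCompact_closedBall b s).inter_left hX).image_of_continuousOn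
      (hf.mono inter_subset_left) |>.bddAbove
  exact csSup_le_csSup hbdd (hne.image f)
    (image_mono (inter_subset_inter_right X (closedBall_subset_closedBall' hrs)))

variable (hX : IsClosed X) (hf : ContinuousOn f X) {x : EuclideanSpace ℝ (Fin n)} (hx : x ∈ X)
include hX hf hx

theorem robustReg_monotoneOn : MonotoneOn (fun r => robustReg f X r x) (Ici 0) :=
  fun _ hr _ _ hrs =>
    robustReg_le_robustReg hX hf ⟨x, hx, mem_closedBall_self hr⟩ (by simpa using hrs)

theorem robustReg_mem_Icc {x' : EuclideanSpace ℝ (Fin n)} {ε : ℝ} (hx' : x' ∈ X)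
    (hε : dist x' x ≤ ε) :
    robustReg f X ε x' ∈
      Icc (robustReg f X (ε - dist x' x) x) (robustReg f X (ε + dist x' x) x) :=
  ⟨robustReg_le_robustReg hX hf ⟨x, hx, mem_closedBall_self (sub_nonneg.2 hε)⟩
      (by rw [dist_comm]; linarith),
    robustReg_le_robustReg hX hf ⟨x', hx', mem_closedBall_self (dist_nonneg.trans hε)⟩ le_rfl⟩

theorem robustReg_sub_isBigO {ε : ℝ} (hε : 0 < ε)
    (hg : DifferentiableAt ℝ (fun r => robustReg f X r x) ε) :
    (fun x' => robustReg f X ε x' - robustReg f X ε x) =O[𝓝[X] x] (fun x' => x' - x) := by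
  have hdist : Tendsto (fun x' => dist x' x) (𝓝 x) (𝓝 0) :=
    (continuous_id.dist continuous_const).tendsto' x 0 (dist_self x)
  have hcomp : ∀ t : EuclideanSpace ℝ (Fin n) → ℝ, Tendsto t (𝓝 x) (𝓝 ε) →
      (∀ x', |t x' - ε| = dist x' x) →
      (fun x' => robustReg f X (t x') x - robustReg f X ε x) =O[𝓝 x] (fun x' => x' - x) :=
    fun t ht hdt => (hg.isBigO_sub.comp_tendsto ht).trans <| IsBigO.of_bound 1 <|
      Eventually.of_forall fun x' => by simp [hdt, dist_eq_norm]
  have hup := hcomp (fun x' => ε + dist x' x) (by simpa using hdist.const_add ε)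
    (fun x' => by simp)
  have hdown := hcomp (fun x' => ε - dist x' x) (by simpa using hdist.const_sub ε)
    (fun x' => by simp)
  refine IsBigO.trans ?_ ((hup.norm_left.add hdown.norm_left).mono nhdsWithin_le_nhds)
  refine IsBigO.of_bound 1 ?_
  filter_upwards [self_mem_nhdsWithin,
    nhdsWithin_le_nhds (hdist.eventually (eventually_le_nhds hε))] with x' hx' hx'ε
  obtain ⟨hlo, hhi⟩ := robustReg_mem_Icc hX hf hx hx' hx'ε
  set A := robustReg f X (ε + dist x' x) x - robustReg f X ε x
  set B := robustReg f X (ε - dist x' x) x - robustReg f X ε x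
  simp only [Real.norm_eq_abs, one_mul]
  refine (abs_sub_le_iff.2 ⟨?_, ?_⟩).trans (le_abs_self _)
  · linarith [le_abs_self A, abs_nonneg B]
  · linarith [neg_abs_le B, abs_nonneg A]

end robustReg

/-- For a continuous function `f : X → ℝ` (`X` closed) and `x ∈ X`, there exists `ε̄ > 0`
such that `f̄_ε` is calm at `x` for all `ε ∈ (0, ε̄]` except on a set of measure zero. -/
theorem robustReg_calm_ae {n : ℕ} (f : EuclideanSpace ℝ (Fin n) → ℝ)
    (X : Set (EuclideanSpace ℝ (Fin n))) (x : EuclideanSpace ℝ (Fin n))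
    (hX : IsClosed X) (hx : x ∈ X) (hf : ContinuousOn f X) :
    ∃ εb > (0 : ℝ), MeasureTheory.volume
      {ε : ℝ | ε ∈ Set.Ioc 0 εb ∧ calmMod (fun x' => robustReg f X ε x') X x = ⊤} = 0 := by
  have hdiff : ∀ᵐ ε, ε ∈ Ioi 0 →
      DifferentiableWithinAt ℝ (fun r => robustReg f X r x) (Ioi 0) ε :=
    ((robustReg_monotoneOn hX hf hx).mono Ioi_subset_Ici_self).ae_differentiableWithinAt_of_mem
  refine ⟨1, one_pos, measure_mono_null ?_ (ae_iff.1 hdiff)⟩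
  rintro ε ⟨⟨hε, -⟩, hcalm⟩ hdiffε
  exact calmMod_ne_top_of_isBigO
    (robustReg_sub_isBigO hX hf hx hε ((hdiffε hε).differentiableAt (Ioi_mem_nhds hε))) hcalm
end

section
/- If X ⊆ ℝⁿ is convex, then for every ε > 0 and all x, x' ∈ X, B_ε(x) ∩ X ⊆ (B_ε(x') ∩ X) + |x − x'|·B, i.e., the set-valued map Φ_ε(x) = B_ε(x) ∩ X is globally Lipschitz on X with constant 1 in the Pompeiu–Hausdorff sense. -/
open Filter Topology Metric Set Pointwise

/-- If `X ⊆ ℝⁿ` is convex, then for every `ε > 0` and all `x, x' ∈ X`,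
`B_ε(x) ∩ X ⊆ (B_ε(x') ∩ X) + ‖x − x'‖·B`: the map `Φ_ε(x) = B_ε(x) ∩ X` is globally
Lipschitz on `X` with constant 1 in the Pompeiu–Hausdorff sense. -/
theorem convex_ball_inter_lipschitz {n : ℕ} (X : Set (EuclideanSpace ℝ (Fin n)))
    (hX : Convex ℝ X) (ε : ℝ) (hε : 0 < ε)
    (x x' : EuclideanSpace ℝ (Fin n)) (hx : x ∈ X) (hx' : x' ∈ X) :
    Metric.closedBall x ε ∩ X ⊆
      (Metric.closedBall x' ε ∩ X) + Metric.closedBall (0 : EuclideanSpace ℝ (Fin n)) ‖x - x'‖ := by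
  rintro y ⟨hy1, hy2⟩
  rw [Set.mem_add]
  by_cases h : ‖y - x'‖ ≤ ε
  · exact ⟨y, ⟨by simpa [mem_closedBall, dist_eq_norm] using h, hy2⟩, 0,
      by simp, by simp⟩
  · push_neg at h
    set r := ‖y - x'‖ with hr_def
    have hr : 0 < r := lt_trans hε h
    set t := ε / r with ht_def
    have ht0 : 0 < t := div_pos hε hr
    have ht1 : t ≤ 1 := (div_le_one hr).2 h.le
    set z := (1 - t) • x' + t • y with hz_def
    have hzX : z ∈ X := hX hx' hy2 (by linarith) ht0.le (by ring)
    have hzx' : z - x' = t • (y - x') := by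
      rw [hz_def]; module
    have hyz : y - z = (1 - t) • (y - x') := by
      rw [hz_def]; module
    have hz_ball : z ∈ Metric.closedBall x' ε := by
      rw [mem_closedBall, dist_eq_norm, hzx', norm_smul, Real.norm_of_nonneg ht0.le,
        ← hr_def, ht_def, div_mul_cancel₀ _ hr.ne']
    have hyx : ‖y - x‖ ≤ ε := by
      rw [← dist_eq_norm]; exact mem_closedBall.mp hy1
    have htri : r ≤ ‖y - x‖ + ‖x - x'‖ := by
      calc r = ‖(y - x) + (x - x')‖ := by rw [hr_def, sub_add_sub_cancel]
        _ ≤ ‖y - x‖ + ‖x - x'‖ := norm_add_le _ _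
    have hdist : ‖y - z‖ ≤ ‖x - x'‖ := by
      rw [hyz, norm_smul, Real.norm_of_nonneg (by linarith), ← hr_def, ht_def]
      have : (1 - ε / r) * r = r - ε := by field_simp
      rw [this]; linarith
    exact ⟨z, ⟨hz_ball, hzX⟩, y - z,
      by simpa [mem_closedBall, dist_eq_norm] using hdist, by abel⟩
end

section
/- Suppose φ : (0,1)² → ℝ is continuous. Then for each t ∈ (0,1), the intersection of the closure of the graph of φ (in ℝ²×ℝ) with the vertical line {(0,t)} × ℝ is either empty, a single point, or a connected line segment (i.e., it is a convex subset of that line). -/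
open Filter Topology Set

/-- If `φ : (0,1)² → ℝ` is continuous, then for each `t ∈ (0,1)` the intersection of the
closure of the graph of `φ` with the vertical line `{(0,t)} × ℝ` is empty, a single point,
or a line segment: the set of its third coordinates is convex. -/
theorem closure_graph_slice_convex (φ : ℝ × ℝ → ℝ)
    (hφ : ContinuousOn φ (Set.Ioo (0:ℝ) 1 ×ˢ Set.Ioo (0:ℝ) 1))
    (t : ℝ) (ht : t ∈ Set.Ioo (0:ℝ) 1) :
    Convex ℝ {α : ℝ | (((0:ℝ), t), α) ∈
      closure {p : (ℝ × ℝ) × ℝ | p.1 ∈ Set.Ioo (0:ℝ) 1 ×ˢ Set.Ioo (0:ℝ) 1 ∧ p.2 = φ p.1}} := by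
  rw [convex_iff_ordConnected]
  constructor
  intro α hα β hβ γ hγ
  rcases eq_or_lt_of_le hγ.1 with h1 | h1
  · exact h1 ▸ hα
  rcases eq_or_lt_of_le hγ.2 with h2 | h2
  · exact h2 ▸ hβ
  simp only [mem_setOf_eq] at hα hβ ⊢
  rw [Metric.mem_closure_iff] at hα hβ ⊢
  intro ε hε
  set ε' := min ε (min (γ - α) (β - γ)) with hε'def
  have hε'pos : 0 < ε' := lt_min hε (lt_min (sub_pos.2 h1) (sub_pos.2 h2))
  obtain ⟨b₁, hb₁G, hb₁d⟩ := hα ε' hε'pos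
  obtain ⟨b₂, hb₂G, hb₂d⟩ := hβ ε' hε'pos
  rw [Prod.dist_eq] at hb₁d hb₂d
  obtain ⟨hpd, hpv⟩ := max_lt_iff.mp hb₁d
  obtain ⟨hqd, hqv⟩ := max_lt_iff.mp hb₂d
  set p := b₁.1 with hp
  set q := b₂.1 with hq
  have hpsq : p ∈ Set.Ioo (0:ℝ) 1 ×ˢ Set.Ioo (0:ℝ) 1 := hb₁G.1
  have hqsq : q ∈ Set.Ioo (0:ℝ) 1 ×ˢ Set.Ioo (0:ℝ) 1 := hb₂G.1
  have hε'le1 : ε' ≤ γ - α := le_trans (min_le_right _ _) (min_le_left _ _)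
  have hε'le2 : ε' ≤ β - γ := le_trans (min_le_right _ _) (min_le_right _ _)
  have hφp : φ p < γ := by
    have : |α - φ p| < ε' := by rwa [← hb₁G.2, ← Real.dist_eq]
    have := abs_sub_lt_iff.mp this
    linarith [this.2]
  have hφq : γ < φ q := by
    have : |β - φ q| < ε' := by rwa [← hb₂G.2, ← Real.dist_eq]
    have := abs_sub_lt_iff.mp this
    linarith [this.1]
  -- segment from p to q stays in the square and in the ε'-ball around (0,t)
  have hsegsq : segment ℝ p q ⊆ Set.Ioo (0:ℝ) 1 ×ˢ Set.Ioo (0:ℝ) 1 :=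
    ((convex_Ioo (0:ℝ) 1).prod (convex_Ioo (0:ℝ) 1)).segment_subset hpsq hqsq
  have hsegball : segment ℝ p q ⊆ Metric.ball (((0:ℝ), t)) ε' :=
    (convex_ball (((0:ℝ), t)) ε').segment_subset (Metric.mem_ball'.mpr hpd)
      (Metric.mem_ball'.mpr hqd)
  have hconn : IsPreconnected (segment ℝ p q) := (convex_segment p q).isPreconnected
  have hivt : Set.Icc (φ p) (φ q) ⊆ φ '' segment ℝ p q :=
    hconn.intermediate_value (left_mem_segment ℝ p q) (right_mem_segment ℝ p q)
      (hφ.mono hsegsq)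
  obtain ⟨r, hrseg, hrγ⟩ := hivt ⟨hφp.le, hφq.le⟩
  refine ⟨((r, γ)), ⟨hsegsq hrseg, hrγ.symm⟩, ?_⟩
  rw [Prod.dist_eq]
  simp only [dist_self]
  have hr : dist (((0:ℝ), t)) r < ε' := Metric.mem_ball'.mp (hsegball hrseg)
  calc max (dist (((0:ℝ), t)) r) 0 = dist (((0:ℝ), t)) r := max_eq_left dist_nonneg
    _ < ε' := hr
    _ ≤ ε := min_le_left _ _
end

section
/- Let f : ℝ → ℝ be defined by f(x) = −x for x < 0 and f(x) = √x for x ≥ 0, and let ε > 0. Then the robust regularization is f̄_ε(x) = ε − x for x < α(ε) and f̄_ε(x) = √(ε + x) for x ≥ α(ε), where α(ε) = (1 + 2ε − √(1+8ε))/2; moreover α(ε) > −ε and f̄_ε is Lipschitz at its minimizer α(ε). -/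
open Filter Topology Metric Set
open scoped ENNReal

/-- For `f(x) = −x` (`x<0`), `√x` (`x≥0`) and `ε > 0`, the robust regularization is
`f̄_ε(x) = ε − x` for `x < α(ε)` and `√(ε+x)` for `x ≥ α(ε)`, where
`α(ε) = (1+2ε−√(1+8ε))/2`; moreover `α(ε) > −ε` and `f̄_ε` is Lipschitz at its
minimizer `α(ε)`. -/
theorem robustReg_sqrt_example (ε : ℝ) (hε : 0 < ε) :
    (∀ x : ℝ,
      sSup ((fun x' : ℝ => if x' < 0 then -x' else Real.sqrt x') ''
          {x' : ℝ | |x' - x| ≤ ε})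
        = if x < (1 + 2*ε - Real.sqrt (1 + 8*ε)) / 2 then ε - x else Real.sqrt (ε + x)) ∧
    (1 + 2*ε - Real.sqrt (1 + 8*ε)) / 2 > -ε ∧
    lipMod
      (fun x : ℝ => sSup ((fun x' : ℝ => if x' < 0 then -x' else Real.sqrt x') ''
          {x' : ℝ | |x' - x| ≤ ε}))
      Set.univ ((1 + 2*ε - Real.sqrt (1 + 8*ε)) / 2) ≠ ⊤ := by
  have h8 : (0:ℝ) ≤ 1 + 8*ε := by linarith
  set s := Real.sqrt (1 + 8*ε) with hs_def
  have hs2 : s^2 = 1 + 8*ε := Real.sq_sqrt h8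
  have hs0 : 0 ≤ s := Real.sqrt_nonneg _
  have hs1 : 1 < s := by nlinarith
  have hsu : s < 1 + 4*ε := by nlinarith
  set α := (1 + 2*ε - s)/2 with hα_def
  have hεα : 0 < ε + α := by rw [hα_def]; linarith
  have hεmα : ε - α = (s-1)/2 := by rw [hα_def]; ring
  have hsqrtεα : Real.sqrt (ε + α) = (s-1)/2 := by
    have h1 : ε + α = ((s-1)/2)^2 := by rw [hα_def]; nlinarith [hs2]
    rw [h1, Real.sqrt_sq (by linarith)]
  -- the sup equals a max
  have hsup : ∀ x : ℝ,
      sSup ((fun x' : ℝ => if x' < 0 then -x' else Real.sqrt x') '' {x' : ℝ | |x' - x| ≤ ε})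
        = max (ε - x) (Real.sqrt (ε + x)) := by
    intro x
    have hub : ∀ y ∈ (fun x' : ℝ => if x' < 0 then -x' else Real.sqrt x') ''
        {x' : ℝ | |x' - x| ≤ ε}, y ≤ max (ε - x) (Real.sqrt (ε + x)) := by
      rintro y ⟨x', hx', rfl⟩
      simp only [Set.mem_setOf_eq] at hx'
      obtain ⟨h1, h2⟩ := abs_le.mp hx'
      by_cases hneg : x' < 0
      · simp only [if_pos hneg]
        exact le_max_of_le_left (by linarith)
      · simp only [if_neg hneg]
        exact le_max_of_le_right (Real.sqrt_le_sqrt (by linarith))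
    refine le_antisymm (Real.sSup_le hub (le_max_of_le_right (Real.sqrt_nonneg _))) ?_
    rcases le_total (Real.sqrt (ε + x)) (ε - x) with hc | hc
    · rw [max_eq_left hc]
      have hxε : x - ε < 0 := by
        by_contra hge
        push_neg at hge
        have hp : 0 < Real.sqrt (ε + x) := Real.sqrt_pos.2 (by linarith)
        linarith
      refine le_csSup ⟨_, hub⟩ ⟨x - ε, ?_, ?_⟩
      · simp only [Set.mem_setOf_eq]
        rw [show x - ε - x = -ε by ring, abs_neg, abs_of_pos hε]
      · simp only [if_pos hxε]; ring
    · rw [max_eq_right hc]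
      by_cases hpos : 0 ≤ ε + x
      · refine le_csSup ⟨_, hub⟩ ⟨x + ε, ?_, ?_⟩
        · simp only [Set.mem_setOf_eq]
          rw [show x + ε - x = ε by ring, abs_of_pos hε]
        · show (if x + ε < 0 then -(x + ε) else Real.sqrt (x + ε)) = Real.sqrt (ε + x)
          rw [if_neg (by linarith), add_comm]
      · push_neg at hpos
        have h0 : Real.sqrt (ε + x) = 0 := Real.sqrt_eq_zero'.2 (by linarith)
        rw [h0] at hc
        linarith
  -- max equals the if-then-else
  have hB : ∀ x : ℝ, max (ε - x) (Real.sqrt (ε + x))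
      = if x < α then ε - x else Real.sqrt (ε + x) := by
    intro x
    split_ifs with h
    · apply max_eq_left
      have hexα : ε - α < ε - x := by linarith
      have h0 : 0 < ε - x := by linarith [hεmα, hs1]
      by_cases hpos : 0 ≤ ε + x
      · have hβ : x < (1 + 2*ε + s)/2 := by rw [hα_def] at h; linarith
        have key : ε + x ≤ (ε - x)^2 := by
          have hq : 0 ≤ (α - x) * ((1 + 2*ε + s)/2 - x) :=
            mul_nonneg (by linarith) (by linarith)
          rw [hα_def] at hq
          nlinarith [hs2]
        calc Real.sqrt (ε + x) ≤ Real.sqrt ((ε - x)^2) := Real.sqrt_le_sqrt key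
          _ = ε - x := Real.sqrt_sq (le_of_lt h0)
      · rw [Real.sqrt_eq_zero'.2 (by linarith)]
        linarith
    · push_neg at h
      apply max_eq_right
      calc ε - x ≤ ε - α := by linarith
        _ = Real.sqrt (ε + α) := by rw [hsqrtεα, hεmα]
        _ ≤ Real.sqrt (ε + x) := Real.sqrt_le_sqrt (by linarith)
  refine ⟨fun x => by rw [hsup x, hB x], by linarith, ?_⟩
  -- Lipschitz part
  have hfun : (fun x : ℝ => sSup ((fun x' : ℝ => if x' < 0 then -x' else Real.sqrt x') ''
      {x' : ℝ | |x' - x| ≤ ε})) = fun x => max (ε - x) (Real.sqrt (ε + x)) := funext hsup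
  rw [hfun]
  set F : ℝ → ℝ := fun x => max (ε - x) (Real.sqrt (ε + x)) with hF
  set c := (ε + α)/2 with hc_def
  have hc : 0 < c := half_pos hεα
  have h2c : ε + α = 2*c := by rw [hc_def]; ring
  have hsc : 0 < Real.sqrt c := Real.sqrt_pos.2 hc
  set K := max 1 (1/(2*Real.sqrt c)) with hK
  have hK0 : 0 ≤ K := le_trans zero_le_one (le_max_left _ _)
  have hlip : ∀ u v : ℝ, |u - α| < c → |v - α| < c → |F u - F v| ≤ K * |u - v| := by
    intro u v hu hv
    obtain ⟨hu1, hu2⟩ := abs_lt.mp hu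
    obtain ⟨hv1, hv2⟩ := abs_lt.mp hv
    have hu' : c ≤ ε + u := by linarith
    have hv' : c ≤ ε + v := by linarith
    have ha : (0:ℝ) ≤ ε + u := le_trans (le_of_lt hc) hu'
    have hb : (0:ℝ) ≤ ε + v := le_trans (le_of_lt hc) hv'
    have hsum : 2*Real.sqrt c ≤ Real.sqrt (ε+u) + Real.sqrt (ε+v) := by
      have h1 := Real.sqrt_le_sqrt hu'
      have h2 := Real.sqrt_le_sqrt hv'
      linarith
    have hprod : |Real.sqrt (ε+u) - Real.sqrt (ε+v)| * (Real.sqrt (ε+u) + Real.sqrt (ε+v))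
        = |u - v| := by
      rw [← abs_of_nonneg (show (0:ℝ) ≤ Real.sqrt (ε+u) + Real.sqrt (ε+v) by positivity),
        ← abs_mul]
      have : (Real.sqrt (ε+u) - Real.sqrt (ε+v)) * (Real.sqrt (ε+u) + Real.sqrt (ε+v))
          = u - v := by
        have h1 := Real.sq_sqrt ha
        have h2 := Real.sq_sqrt hb
        nlinarith
      rw [this]
    have hsqrt : |Real.sqrt (ε+u) - Real.sqrt (ε+v)| ≤ (1/(2*Real.sqrt c)) * |u - v| := by
      rw [one_div, mul_comm, ← div_eq_mul_inv, le_div_iff₀ (by positivity)]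
      calc |Real.sqrt (ε+u) - Real.sqrt (ε+v)| * (2*Real.sqrt c)
          ≤ |Real.sqrt (ε+u) - Real.sqrt (ε+v)| * (Real.sqrt (ε+u) + Real.sqrt (ε+v)) :=
            mul_le_mul_of_nonneg_left hsum (abs_nonneg _)
        _ = |u - v| := hprod
    have hlin : |(ε - u) - (ε - v)| = |u - v| := by
      rw [show (ε-u)-(ε-v) = -(u-v) by ring, abs_neg]
    calc |F u - F v| ≤ max |(ε-u)-(ε-v)| |Real.sqrt (ε+u) - Real.sqrt (ε+v)| :=
          abs_max_sub_max_le_max _ _ _ _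
      _ ≤ K * |u - v| := by
          apply max_le
          · rw [hlin]
            calc |u - v| = 1 * |u - v| := (one_mul _).symm
              _ ≤ K * |u - v| := mul_le_mul_of_nonneg_right (le_max_left _ _) (abs_nonneg _)
          · exact le_trans hsqrt
              (mul_le_mul_of_nonneg_right (le_max_right _ _) (abs_nonneg _))
  have hle : lipMod F Set.univ α ≤ ENNReal.ofReal K := by
    rw [lipMod]
    simp only [nhdsWithin_univ]
    apply Filter.limsup_le_of_le (by isBoundedDefault)
    have h1 : ∀ᶠ x : ℝ in 𝓝 α, |x - α| < c := by
      filter_upwards [Metric.ball_mem_nhds α hc] with x hx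
      simpa [Real.dist_eq] using hx
    have hev : ∀ᶠ p : ℝ × ℝ in (𝓝 α ×ˢ 𝓝 α) ⊓ 𝓟 {p : ℝ × ℝ | p.1 ≠ p.2},
        |p.1 - α| < c ∧ |p.2 - α| < c :=
      Filter.Eventually.filter_mono inf_le_left (h1.prod_mk h1)
    have hne : ∀ᶠ p : ℝ × ℝ in (𝓝 α ×ˢ 𝓝 α) ⊓ 𝓟 {p : ℝ × ℝ | p.1 ≠ p.2}, p.1 ≠ p.2 :=
      Filter.Eventually.filter_mono inf_le_right (Filter.eventually_principal.2 fun p hp => hp)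
    filter_upwards [hev, hne] with p hp hpne
    apply ENNReal.ofReal_le_ofReal
    have hpos : 0 < ‖p.1 - p.2‖ := by
      rw [Real.norm_eq_abs]
      exact abs_pos.2 (sub_ne_zero.2 hpne)
    rw [div_le_iff₀ hpos, Real.norm_eq_abs, Real.norm_eq_abs]
    exact hlip p.1 p.2 hp.1 hp.2
  exact ne_top_of_le_ne_top ENNReal.ofReal_ne_top hle
end
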